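/- Consider the LP max ∑_{i∈E} c_i x_i over P'(f) = {x : x(A) ≤ f(A) ∀ A ⊆ E, x_i ≥ d_i ∀ i}, with c_1 ≥ c_2 ≥ ... ≥ c_n > 0. Suppose E is partitioned into groups G_1,...,G_m, each with a lead index ℓ_j and nonlead set G_j^S, such that ℓ_j ≤ ℓ_{j+1}, ℓ_j ≤ k for all k ∈ G_j^S; define x by x_k = d_k for nonlead k and x_{ℓ_j} = f(G^{(j)}) - f(G^{(j-1)}) - d(G_j^S). If x is feasible for P'(f), then x is optimal, and its objective value equals ∑_{j=1}^m (c_{ℓ_j} - c_{ℓ_{j+1}}) f(G^{(j)}) - ∑_{j=1}^m ∑_{k∈G_j^S} (c_{ℓ_j} - c_k) d_k, where c_{ℓ_{m+1}} := 0. -/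

import Mathlib

/-!
The objective `∑ c_i y_i` of any `y` can be rewritten, by splitting off the lead of each group and
summing by parts over the chain `G^{(1)} ⊆ ⋯ ⊆ G^{(m)}`, as
`∑_j (c_{ℓ_j} - c_{ℓ_{j+1}}) y(G^{(j)}) - ∑_j ∑_{k ∈ G_j^S} (c_{ℓ_j} - c_k) y_k`.
The ordering of the leads makes every coefficient `c_{ℓ_j} - c_{ℓ_{j+1}}` and `c_{ℓ_j} - c_k`
nonnegative, so for feasible `y` this is at most the same expression with `y(G^{(j)})` replaced by
`f(G^{(j)})` and `y_k` by `d_k` (a dual solution in disguise). The grouping vector `x` is tight in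
all these constraints, so it attains the bound.
-/

open Finset

def Submodular {n : ℕ} (f : Finset (Fin n) → ℝ) : Prop :=
  ∀ A B : Finset (Fin n), f (A ∪ B) + f (A ∩ B) ≤ f A + f B

/-- `cumUnion G j = G_1 ∪ ⋯ ∪ G_j` (0-indexed: union of `G 0, …, G (j-1)`). -/
def cumUnion {n : ℕ} (G : ℕ → Finset (Fin n)) (j : ℕ) : Finset (Fin n) :=
  (Finset.range j).biUnion G

theorem Finset.sum_range_mul_sub_eq_sum_sub_mul {R : Type*} [CommRing R] (a T : ℕ → R) (m : ℕ)
    (h0 : T 0 = 0) (hm : a m = 0) :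
    ∑ j ∈ range m, a j * (T (j + 1) - T j) = ∑ j ∈ range m, (a j - a (j + 1)) * T (j + 1) := by
  rw [← sub_eq_zero, ← sum_sub_distrib]
  have h : ∀ j ∈ range m, a j * (T (j + 1) - T j) - (a j - a (j + 1)) * T (j + 1) =
      a (j + 1) * T (j + 1) - a j * T j := fun j _ => by ring
  rw [sum_congr rfl h, sum_range_sub (fun j => a j * T j), hm, h0, zero_mul, mul_zero, sub_zero]

theorem Finset.sum_mul_eq_mul_sum_sub_sum_sdiff_singleton {ι R : Type*} [DecidableEq ι]
    [CommRing R] {s : Finset ι} {l : ι} (hl : l ∈ s) (c y : ι → R) :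
    ∑ k ∈ s, c k * y k = c l * ∑ k ∈ s, y k - ∑ k ∈ s \ {l}, (c l - c k) * y k := by
  simp only [sum_eq_add_sum_sdiff_singleton_of_mem hl, sub_mul, sum_sub_distrib, mul_add,
    mul_sum]
  ring

section CumUnion

variable {n : ℕ} (G : ℕ → Finset (Fin n))

@[simp]
theorem cumUnion_zero : cumUnion G 0 = ∅ := by
  simp [cumUnion]

theorem cumUnion_succ (j : ℕ) : cumUnion G (j + 1) = G j ∪ cumUnion G j := by
  simp [cumUnion, range_add_one, biUnion_insert]

variable {G} {m : ℕ}

theorem disjoint_cumUnion (hG : (↑(range m) : Set ℕ).PairwiseDisjoint G) {j : ℕ} (hj : j < m) :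
    Disjoint (G j) (cumUnion G j) := by
  rw [cumUnion, disjoint_biUnion_right]
  intro i hi
  rw [mem_range] at hi
  exact hG (mem_coe.2 (mem_range.2 hj)) (mem_coe.2 (mem_range.2 (hi.trans hj))) hi.ne'

theorem sum_cumUnion_succ {M : Type*} [AddCommMonoid M]
    (hG : (↑(range m) : Set ℕ).PairwiseDisjoint G) {j : ℕ} (hj : j < m) (y : Fin n → M) :
    ∑ k ∈ cumUnion G (j + 1), y k = ∑ k ∈ G j, y k + ∑ k ∈ cumUnion G j, y k := by
  rw [cumUnion_succ, sum_union (disjoint_cumUnion hG hj)]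

end CumUnion

def leadCost {n : ℕ} (m : ℕ) (c : Fin n → ℝ) (ℓ : ℕ → Fin n) (j : ℕ) : ℝ :=
  if j < m then c (ℓ j) else 0

structure IsLeadPartition {n : ℕ} (m : ℕ) (G : ℕ → Finset (Fin n)) (ℓ : ℕ → Fin n) : Prop where
  biUnion_eq_univ : (range m).biUnion G = univ
  pairwiseDisjoint : (↑(range m) : Set ℕ).PairwiseDisjoint G
  lead_mem : ∀ j < m, ℓ j ∈ G j

namespace IsLeadPartition

variable {n m : ℕ} {G : ℕ → Finset (Fin n)} {ℓ : ℕ → Fin n}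

theorem sum_mul_eq (hG : IsLeadPartition m G ℓ) (c y : Fin n → ℝ) :
    ∑ i, c i * y i =
      ∑ j ∈ range m, (leadCost m c ℓ j - leadCost m c ℓ (j + 1)) * ∑ k ∈ cumUnion G (j + 1), y k -
        ∑ j ∈ range m, ∑ k ∈ G j \ {ℓ j}, (c (ℓ j) - c k) * y k := by
  have split_leads : ∑ i, c i * y i = ∑ j ∈ range m, ∑ k ∈ G j, c k * y k := by
    rw [← hG.biUnion_eq_univ, sum_biUnion hG.pairwiseDisjoint]
  have by_parts := sum_range_mul_sub_eq_sum_sub_mul (leadCost m c ℓ)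
    (fun j => ∑ k ∈ cumUnion G j, y k) m (by simp) (by simp [leadCost])
  rw [split_leads, ← by_parts, ← sum_sub_distrib]
  refine sum_congr rfl fun j hj => ?_
  rw [mem_range] at hj
  rw [sum_mul_eq_mul_sum_sub_sum_sdiff_singleton (hG.lead_mem j hj),
    sum_cumUnion_succ hG.pairwiseDisjoint hj, leadCost, if_pos hj, add_sub_cancel_right]

theorem sum_cumUnion_eq {f : Finset (Fin n) → ℝ} (hnorm : f ∅ = 0) (hG : IsLeadPartition m G ℓ)
    {d x : Fin n → ℝ} (hxnonlead : ∀ j < m, ∀ k ∈ G j \ {ℓ j}, x k = d k)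
    (hxlead : ∀ j < m,
      x (ℓ j) = f (cumUnion G (j + 1)) - f (cumUnion G j) - ∑ k ∈ G j \ {ℓ j}, d k) :
    ∀ j ≤ m, ∑ k ∈ cumUnion G j, x k = f (cumUnion G j)
  | 0, _ => by simp [hnorm]
  | j + 1, hj => by
    have hgroup : ∑ k ∈ G j, x k = x (ℓ j) + ∑ k ∈ G j \ {ℓ j}, d k := by
      rw [sum_eq_add_sum_sdiff_singleton_of_mem (hG.lead_mem j hj)]
      exact congrArg _ (sum_congr rfl (hxnonlead j hj))
    rw [sum_cumUnion_succ hG.pairwiseDisjoint hj, sum_cumUnion_eq hnorm hG hxnonlead hxlead j (by omega),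
      hgroup, hxlead j hj]
    ring

theorem sum_mul_le {f : Finset (Fin n) → ℝ} {d c : Fin n → ℝ} (hG : IsLeadPartition m G ℓ)
    (hcdec : ∀ i j : Fin n, i ≤ j → c j ≤ c i) (hc : ∀ i, 0 ≤ c i)
    (hlmono : ∀ j, j + 1 < m → ℓ j ≤ ℓ (j + 1)) (hlmin : ∀ j < m, ∀ k ∈ G j \ {ℓ j}, ℓ j ≤ k)
    {y : Fin n → ℝ} (hyA : ∀ A : Finset (Fin n), ∑ i ∈ A, y i ≤ f A) (hyd : ∀ i, d i ≤ y i) :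
    ∑ i, c i * y i ≤
      ∑ j ∈ range m, (leadCost m c ℓ j - leadCost m c ℓ (j + 1)) * f (cumUnion G (j + 1)) -
        ∑ j ∈ range m, ∑ k ∈ G j \ {ℓ j}, (c (ℓ j) - c k) * d k := by
  rw [hG.sum_mul_eq]
  refine sub_le_sub (sum_le_sum fun j hj => ?_) (sum_le_sum fun j hj => sum_le_sum fun k hk => ?_)
    <;> rw [mem_range] at hj
  · have hcoef : leadCost m c ℓ (j + 1) ≤ leadCost m c ℓ j := by
      unfold leadCost
      split_ifs with h
      · exact hcdec _ _ (hlmono j h)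
      · exact hc _
    exact mul_le_mul_of_nonneg_left (hyA _) (sub_nonneg.2 hcoef)
  · exact mul_le_mul_of_nonneg_left (hyd k) (sub_nonneg.2 (hcdec _ _ (hlmin j hj k hk)))

end IsLeadPartition

theorem grouping_optimality_general {n m : ℕ} (f : Finset (Fin n) → ℝ)
    (hnorm : f ∅ = 0)
    (d : Fin n → ℝ)
    (c : Fin n → ℝ)
    (hcdec : ∀ i j : Fin n, i ≤ j → c j ≤ c i)
    (hcpos : ∀ i, 0 < c i)
    (G : ℕ → Finset (Fin n)) (ℓ : ℕ → Fin n)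
    (hpart : (Finset.range m).biUnion G = Finset.univ)
    (hdisj : ∀ j < m, ∀ j' < m, j ≠ j' → Disjoint (G j) (G j'))
    (hlead : ∀ j < m, ℓ j ∈ G j)
    (hlmono : ∀ j, j + 1 < m → ℓ j ≤ ℓ (j + 1))
    (hlmin : ∀ j < m, ∀ k ∈ G j \ {ℓ j}, ℓ j ≤ k)
    (x : Fin n → ℝ)
    (hxnonlead : ∀ j < m, ∀ k ∈ G j \ {ℓ j}, x k = d k)
    (hxlead : ∀ j < m,
      x (ℓ j) = f (cumUnion G (j + 1)) - f (cumUnion G j) - ∑ k ∈ G j \ {ℓ j}, d k) :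
    (∀ y : Fin n → ℝ, (∀ A : Finset (Fin n), ∑ i ∈ A, y i ≤ f A) → (∀ i, d i ≤ y i) →
        ∑ i, c i * y i ≤ ∑ i, c i * x i) ∧
      ∑ i, c i * x i =
        ∑ j ∈ Finset.range m,
            ((if j < m then c (ℓ j) else 0) - (if j + 1 < m then c (ℓ (j + 1)) else 0)) *
              f (cumUnion G (j + 1)) -
          ∑ j ∈ Finset.range m, ∑ k ∈ G j \ {ℓ j}, (c (ℓ j) - c k) * d k := by
  have hG : IsLeadPartition m G ℓ :=
    ⟨hpart, fun j hj j' hj' hne => hdisj j (mem_range.1 hj) j' (mem_range.1 hj') hne, hlead⟩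
  have hvalue : ∑ i, c i * x i =
      ∑ j ∈ range m, (leadCost m c ℓ j - leadCost m c ℓ (j + 1)) * f (cumUnion G (j + 1)) -
        ∑ j ∈ range m, ∑ k ∈ G j \ {ℓ j}, (c (ℓ j) - c k) * d k := by
    rw [hG.sum_mul_eq]
    congr 1 <;> refine sum_congr rfl fun j hj => ?_ <;> rw [mem_range] at hj
    · rw [hG.sum_cumUnion_eq hnorm hxnonlead hxlead (j + 1) hj]
    · exact sum_congr rfl fun k hk => by rw [hxnonlead j hj k hk]
  exact ⟨fun y hyA hyd => hvalue ▸ hG.sum_mul_le hcdec (fun i => (hcpos i).le) hlmono hlmin hyA hyd, hvalue⟩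

theorem grouping_optimality {n m : ℕ} (f : Finset (Fin n) → ℝ)
    (hnorm : f ∅ = 0)
    (hmono : ∀ A B : Finset (Fin n), A ⊆ B → f A ≤ f B)
    (hsub : Submodular f)
    (d : Fin n → ℝ) (hd : ∀ i, 0 ≤ d i)
    (c : Fin n → ℝ)
    (hcdec : ∀ i j : Fin n, i ≤ j → c j ≤ c i)
    (hcpos : ∀ i, 0 < c i)
    (G : ℕ → Finset (Fin n)) (ℓ : ℕ → Fin n)
    (hpart : (Finset.range m).biUnion G = Finset.univ)
    (hdisj : ∀ j < m, ∀ j' < m, j ≠ j' → Disjoint (G j) (G j'))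
    (hlead : ∀ j < m, ℓ j ∈ G j)
    (hlmono : ∀ j, j + 1 < m → ℓ j ≤ ℓ (j + 1))
    (hlmin : ∀ j < m, ∀ k ∈ G j \ {ℓ j}, ℓ j ≤ k)
    (x : Fin n → ℝ)
    (hxnonlead : ∀ j < m, ∀ k ∈ G j \ {ℓ j}, x k = d k)
    (hxlead : ∀ j < m,
      x (ℓ j) = f (cumUnion G (j + 1)) - f (cumUnion G j) - ∑ k ∈ G j \ {ℓ j}, d k)
    (hxfeas : (∀ A : Finset (Fin n), ∑ i ∈ A, x i ≤ f A) ∧ ∀ i, d i ≤ x i) :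
    (∀ y : Fin n → ℝ, (∀ A : Finset (Fin n), ∑ i ∈ A, y i ≤ f A) → (∀ i, d i ≤ y i) →
        ∑ i, c i * y i ≤ ∑ i, c i * x i) ∧
      ∑ i, c i * x i =
        ∑ j ∈ Finset.range m,
            ((if j < m then c (ℓ j) else 0) - (if j + 1 < m then c (ℓ (j + 1)) else 0)) *
              f (cumUnion G (j + 1)) -
          ∑ j ∈ Finset.range m, ∑ k ∈ G j \ {ℓ j}, (c (ℓ j) - c k) * d k :=
  grouping_optimality_general f hnorm d c hcdec hcpos G ℓ hpart hdisj hlead hlmono hlmin x hxnonlead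
    hxlead
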